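/- The algebraic identity p_0·p_x + q_0·(αΔ − νI)q_x = (1/2)[q_0·(αΔ − νI)q_x − ((αΔ − νI)q_0)·q_x] + (1/2) A[p_0·q_x + q_0·p_x] holds, where A is the Hamiltonian vector field; moreover the first bracket is a discrete gradient: (1/2)[q_0·(αΔ−νI)q_x − ((αΔ−νI)q_0)·q_x] = (α/2) Σ_j ∇_{e_j}[q_x·q_{−e_j} − q_0·q_{x−e_j}], where ∇_{e_j} shifts all lattice indices by e_j. -/

import Mathlib

/-! The observable `p_0·q_x + q_0·p_x` is affine along every coordinate line, so `A` acts on it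
through the slopes of these lines alone, and only the sites `0` and `x` contribute:
`A[p_0·q_x + q_0·p_x] = 2 p_0·p_x + q_0·(αΔ − νI)q_x + ((αΔ − νI)q_0)·q_x`.
Averaging this with the antisymmetric bracket gives the first identity. In the bracket the
`ν`-terms cancel, and expanding `Δ` leaves, for each direction `e_j`, the difference between
`q_x·q_{−e_j} − q_0·q_{x−e_j}` and its shift by `e_j`. -/

open scoped BigOperators

/-- Canonical basis vector `e j` of `ℤ^d`. -/
def latE (d : ℕ) (j : Fin d) : Fin d → ℤ := fun i => if i = j then 1 else 0

/-- Discrete Laplacian on `ℤ^d` acting componentwise on `q : ℤ^d → ℝ^d`. -/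
def discLap {d : ℕ} (q : (Fin d → ℤ) → Fin d → ℝ) (x : Fin d → ℤ) (k : Fin d) : ℝ :=
  ∑ m : Fin d, (q (x + latE d m) k + q (x - latE d m) k - 2 * q x k)

/-- The Hamiltonian vector field
`A = Σ_y [ p_y·∂_{q_y} + ((αΔ − νI)q_y)·∂_{p_y} ]` acting on a function `F`
of the configuration `(q, p)`, via directional derivatives. -/
noncomputable def Agen {d : ℕ} (α ν : ℝ)
    (F : ((Fin d → ℤ) → Fin d → ℝ) → ((Fin d → ℤ) → Fin d → ℝ) → ℝ)
    (q p : (Fin d → ℤ) → Fin d → ℝ) : ℝ :=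
  ∑' y : Fin d → ℤ, ∑ k : Fin d,
    (p y k *
      deriv (fun t : ℝ =>
        F (fun z i => q z i + t * (if z = y ∧ i = k then 1 else 0)) p) 0
    + (α * discLap q y k - ν * q y k) *
      deriv (fun t : ℝ =>
        F q (fun z i => p z i + t * (if z = y ∧ i = k then 1 else 0))) 0)

section Perturbation

variable {ι : Type*} [Fintype ι] [DecidableEq ι]

theorem sum_mul_add_mul_ite (f v : ι → ℝ) (P : Prop) [Decidable P] (k : ι) (t : ℝ) :
    ∑ i, f i * (v i + t * (if P ∧ i = k then 1 else 0))
      = ∑ i, f i * v i + t * (if P then f k else 0) := by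
  by_cases hP : P <;> simp [hP, mul_add, Finset.sum_add_distrib, mul_comm t]

theorem sum_add_mul_ite_mul (f v : ι → ℝ) (P : Prop) [Decidable P] (k : ι) (t : ℝ) :
    ∑ i, (v i + t * (if P ∧ i = k then 1 else 0)) * f i
      = ∑ i, v i * f i + t * (if P then f k else 0) := by
  simp only [mul_comm _ (f _), sum_mul_add_mul_ite]

end Perturbation

theorem Agen_eq_tsum_of_affine {d : ℕ} (α ν : ℝ)
    (F : ((Fin d → ℤ) → Fin d → ℝ) → ((Fin d → ℤ) → Fin d → ℝ) → ℝ)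
    (q p a b : (Fin d → ℤ) → Fin d → ℝ)
    (ha : ∀ y k t,
      F (fun z i => q z i + t * (if z = y ∧ i = k then 1 else 0)) p = F q p + t * a y k)
    (hb : ∀ y k t,
      F q (fun z i => p z i + t * (if z = y ∧ i = k then 1 else 0)) = F q p + t * b y k) :
    Agen α ν F q p
      = ∑' y, ∑ k, (p y k * a y k + (α * discLap q y k - ν * q y k) * b y k) := by
  simp only [Agen, ha, hb, deriv_const_add', deriv_mul_const_field', deriv_id'', one_mul]

theorem Agen_pairing {d : ℕ} (α ν : ℝ) (q p : (Fin d → ℤ) → Fin d → ℝ)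
    (x : Fin d → ℤ) :
    Agen α ν (fun q p => (∑ k, p 0 k * q x k) + ∑ k, q 0 k * p x k) q p
      = (∑ k, (p x k * p 0 k + (α * discLap q x k - ν * q x k) * q 0 k))
        + ∑ k, (p 0 k * p x k + (α * discLap q 0 k - ν * q 0 k) * q x k) := by
  rw [Agen_eq_tsum_of_affine α ν _ q p
    (fun y k => (if x = y then p 0 k else 0) + (if 0 = y then p x k else 0))
    (fun y k => (if 0 = y then q x k else 0) + (if x = y then q 0 k else 0))
    (fun y k t => by simp only [sum_mul_add_mul_ite, sum_add_mul_ite_mul]; ring)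
    (fun y k t => by simp only [sum_mul_add_mul_ite, sum_add_mul_ite_mul]; ring)]
  refine (((hasSum_ite_eq x _).add (hasSum_ite_eq 0 _)).congr_fun fun y => ?_).tsum_eq
  by_cases hx : x = y <;> by_cases h0 : 0 = y <;>
    simp_all [eq_comm (a := y), mul_add, Finset.sum_add_distrib]
  -- left over: `x = y = 0`, where the two sites coincide
  ring

theorem sum_mul_discLap_sub_discLap_mul {d : ℕ} (q : (Fin d → ℤ) → Fin d → ℝ)
    (a b : Fin d → ℤ) :
    ∑ k, (q a k * discLap q b k - discLap q a k * q b k)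
      = ∑ j, ((∑ k, q (b + latE d j) k * q a k - ∑ k, q (a + latE d j) k * q b k)
        - (∑ k, q b k * q (a - latE d j) k - ∑ k, q a k * q (b - latE d j) k)) := by
  simp only [discLap, Finset.mul_sum, Finset.sum_mul, ← Finset.sum_sub_distrib]
  rw [Finset.sum_comm]
  exact Finset.sum_congr rfl fun j _ => Finset.sum_congr rfl fun k _ => by ring

theorem fluctuation_dissipation_identity_general (d : ℕ) (α ν : ℝ)
    (q p : (Fin d → ℤ) → Fin d → ℝ) (x : Fin d → ℤ) :
    ((∑ k : Fin d, p 0 k * p x k)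
        + ∑ k : Fin d, q 0 k * (α * discLap q x k - ν * q x k)
      = (1 / 2) * ((∑ k : Fin d, q 0 k * (α * discLap q x k - ν * q x k))
          - ∑ k : Fin d, (α * discLap q 0 k - ν * q 0 k) * q x k)
        + (1 / 2) * Agen α ν
            (fun q p => (∑ k : Fin d, p 0 k * q x k) + ∑ k : Fin d, q 0 k * p x k)
            q p) ∧
    ((1 / 2) * ((∑ k : Fin d, q 0 k * (α * discLap q x k - ν * q x k))
        - ∑ k : Fin d, (α * discLap q 0 k - ν * q 0 k) * q x k)
      = (α / 2) * ∑ j : Fin d,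
          (((∑ k : Fin d, q (x + latE d j) k * q 0 k)
              - ∑ k : Fin d, q (latE d j) k * q x k)
            - ((∑ k : Fin d, q x k * q (-(latE d j)) k)
              - ∑ k : Fin d, q 0 k * q (x - latE d j) k))) := by
  have hν_cancel : (∑ k, q 0 k * (α * discLap q x k - ν * q x k))
      - ∑ k, (α * discLap q 0 k - ν * q 0 k) * q x k
        = α * ∑ k, (q 0 k * discLap q x k - discLap q 0 k * q x k) := by
    rw [← Finset.sum_sub_distrib, Finset.mul_sum]
    exact Finset.sum_congr rfl fun k _ => by ring
  refine ⟨?_, ?_⟩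
  · rw [Agen_pairing]
    simp only [Finset.mul_sum, ← Finset.sum_add_distrib, ← Finset.sum_sub_distrib]
    exact Finset.sum_congr rfl fun k _ => by ring
  · rw [hν_cancel, sum_mul_discLap_sub_discLap_mul]
    simp only [zero_add, zero_sub]
    ring

/-- The fluctuation–dissipation algebraic identity:
`p_0·p_x + q_0·(αΔ − νI)q_x
  = (1/2)[q_0·(αΔ − νI)q_x − ((αΔ − νI)q_0)·q_x] + (1/2) A[p_0·q_x + q_0·p_x]`,
and the antisymmetric bracket is a discrete gradient:
`(1/2)[q_0·(αΔ−νI)q_x − ((αΔ−νI)q_0)·q_x]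
  = (α/2) Σ_j ∇_{e_j}[q_x·q_{−e_j} − q_0·q_{x−e_j}]`, where
`∇_{e_j}` shifts all lattice indices by `e_j`. -/
theorem fluctuation_dissipation_identity (d : ℕ) (α ν : ℝ)
    (hα : 0 < α) (hν : 0 ≤ ν)
    (q p : (Fin d → ℤ) → Fin d → ℝ) (x : Fin d → ℤ) :
    ((∑ k : Fin d, p 0 k * p x k)
        + ∑ k : Fin d, q 0 k * (α * discLap q x k - ν * q x k)
      = (1 / 2) * ((∑ k : Fin d, q 0 k * (α * discLap q x k - ν * q x k))
          - ∑ k : Fin d, (α * discLap q 0 k - ν * q 0 k) * q x k)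
        + (1 / 2) * Agen α ν
            (fun q p => (∑ k : Fin d, p 0 k * q x k) + ∑ k : Fin d, q 0 k * p x k)
            q p) ∧
    ((1 / 2) * ((∑ k : Fin d, q 0 k * (α * discLap q x k - ν * q x k))
        - ∑ k : Fin d, (α * discLap q 0 k - ν * q 0 k) * q x k)
      = (α / 2) * ∑ j : Fin d,
          (((∑ k : Fin d, q (x + latE d j) k * q 0 k)
              - ∑ k : Fin d, q (latE d j) k * q x k)
            - ((∑ k : Fin d, q x k * q (-(latE d j)) k)
              - ∑ k : Fin d, q 0 k * q (x - latE d j) k))) :=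
  fluctuation_dissipation_identity_general d α ν q p x
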